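/- If H_max is at least the makespan of some joint trajectory achieving the minimum sum of costs, then the minimum of the finite-horizon cost J_{H_max} over conflict-free H_max-step joint trajectories equals the optimal sum of costs SOC* of the MAPF instance. Precisely: (a) for every conflict-free H_max-step joint trajectory whose agents all end at their goals and have the stay-at-goal property, J_{H_max} equals its SOC; and (b) hence min J_{H_max} over such trajectories = min SOC over solutions with makespan ≤ H_max. -/

import Mathlib

/-!
Along a trajectory that stays at its goal once it gets there and is at the goal at time `H`, the
set of times spent at the goal is exactly `[T, H]`, where `T` is the arrival time. The running cost
therefore counts the times `0, …, T - 1`, the terminal cost vanishes, and the cost equals `T`.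
Summing over agents gives (a); since the two objectives agree pointwise on any set of such
trajectories, their infima agree, which is (b).
-/

namespace Nat

variable {P : ℕ → Prop} {H : ℕ}

theorem sInf_le_iff_of_stay (hH : P H) (hstay : ∀ ℓ < H, P ℓ → P (ℓ + 1)) {ℓ : ℕ}
    (hℓ : ℓ ≤ H) : sInf {ℓ | P ℓ} ≤ ℓ ↔ P ℓ := by
  refine ⟨fun hle => ?_, fun h => Nat.sInf_le h⟩
  induction ℓ, hle using Nat.le_induction with
  | base => exact Nat.sInf_mem ⟨H, hH⟩
  | succ n _ ih => exact hstay n hℓ (ih (by omega))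

theorem sum_range_ite_eq_sInf_of_stay [DecidablePred P] (hH : P H)
    (hstay : ∀ ℓ < H, P ℓ → P (ℓ + 1)) :
    ∑ ℓ ∈ Finset.range H, (if P ℓ then 0 else 1) = sInf {ℓ | P ℓ} := by
  have hle : sInf {ℓ | P ℓ} ≤ H := Nat.sInf_le hH
  rw [← Finset.sum_range_add_sum_Ico _ hle]
  have before : ∀ ℓ ∈ Finset.range (sInf {ℓ | P ℓ}), (if P ℓ then 0 else 1) = 1 := fun ℓ hℓ =>
    if_neg fun h => (Finset.mem_range.1 hℓ).not_ge (Nat.sInf_le h)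
  have after : ∀ ℓ ∈ Finset.Ico (sInf {ℓ | P ℓ}) H, (if P ℓ then 0 else 1) = 0 := fun ℓ hℓ => by
    obtain ⟨hmℓ, hℓH⟩ := Finset.mem_Ico.1 hℓ
    exact if_pos ((sInf_le_iff_of_stay hH hstay hℓH.le).1 hmℓ)
  rw [Finset.sum_congr rfl before, Finset.sum_congr rfl after]
  simp

end Nat

/-- Identification of the finite-horizon cost with the sum of costs: (a) for
any joint trajectory ending at the goals with the stay-at-goal property, the
finite-horizon cost `J_H` equals the sum of arrival times (SOC); (b) hence
the minima of `J_H` and of SOC over any set of such trajectories (e.g. the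
conflict-free ones) coincide. -/
theorem stmt18 {V A : Type*} [Fintype A] [DecidableEq V]
    (g : A → V) (γ : A → V → ℕ) (hγ0 : ∀ a, γ a (g a) = 0) (H : ℕ) :
    (∀ τ : A → ℕ → V, (∀ a, τ a H = g a) →
      (∀ a, ∀ ℓ < H, τ a ℓ = g a → τ a (ℓ + 1) = g a) →
      (∑ a : A, ((∑ ℓ ∈ Finset.range H, (if τ a ℓ = g a then 0 else 1)) + γ a (τ a H))) =
      ∑ a : A, sInf {ℓ : ℕ | τ a ℓ = g a}) ∧
    (∀ F : Set (A → ℕ → V),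
      (∀ τ ∈ F, (∀ a, τ a H = g a) ∧
        (∀ a, ∀ ℓ < H, τ a ℓ = g a → τ a (ℓ + 1) = g a)) →
      sInf ((fun τ : A → ℕ → V =>
          ∑ a : A, ((∑ ℓ ∈ Finset.range H, (if τ a ℓ = g a then 0 else 1)) + γ a (τ a H))) '' F) =
      sInf ((fun τ : A → ℕ → V => ∑ a : A, sInf {ℓ : ℕ | τ a ℓ = g a}) '' F)) := by
  have cost_eq_soc : ∀ τ : A → ℕ → V, (∀ a, τ a H = g a) →
      (∀ a, ∀ ℓ < H, τ a ℓ = g a → τ a (ℓ + 1) = g a) →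
      (∑ a : A, ((∑ ℓ ∈ Finset.range H, (if τ a ℓ = g a then 0 else 1)) + γ a (τ a H))) =
      ∑ a : A, sInf {ℓ : ℕ | τ a ℓ = g a} := by
    intro τ hend hstay
    refine Finset.sum_congr rfl fun a _ => ?_
    rw [hend a, hγ0 a, add_zero]
    exact Nat.sum_range_ite_eq_sInf_of_stay (hend a) (hstay a)
  refine ⟨cost_eq_soc, fun F hF => ?_⟩
  rw [Set.image_congr fun τ hτ => cost_eq_soc τ (hF τ hτ).1 (hF τ hτ).2]
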